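/- arXiv:1502.05631 — 4 statements merged into one kernel-verified Lean document; each statement's English description precedes it below -/
import Mathlib

section
/- On the canonical Poisson space, if u and TF·u are in the domain of S (i.e., the defining sums are a.s. absolutely convergent), then F · (Su) = S(TF · u) P-almost surely. -/
open MeasureTheory ENNReal Real Filter Topology

namespace PoissonCanonical

variable {Θ : Type*} [MeasurableSpace Θ]

/-- The canonical configuration space: finite sequences of points of `Θ`. -/
abbrev Config (Θ : Type*) := Σ n : ℕ, (Fin n → Θ)

/-- `ε⁺_θ`: add the point `θ` to the configuration. -/
def eplus (θ : Θ) : Config Θ → Config Θ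
  | ⟨n, f⟩ => ⟨n + 1, Fin.cons θ f⟩

/-- The pathwise integral `(Su)(ω) = Σ_i u(θ_i, ε⁻_{θ_i} ω)`. -/
noncomputable def S (u : Θ → Config Θ → ℝ) : Config Θ → ℝ
  | ⟨0, _⟩ => 0
  | ⟨n + 1, f⟩ => ∑ i : Fin (n + 1), u (f i) ⟨n, i.removeNth f⟩

/-- The canonical Poisson probability measure with intensity `ν`:
`P(B) = e^{-ν(Θ)} Σ_n ν^{⊗n}(B_n)/n!`. -/
noncomputable def poissonP (ν : Measure Θ) : Measure (Config Θ) :=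
  Measure.sum fun n =>
    (ENNReal.ofReal (Real.exp (-(ν Set.univ).toReal)) / (Nat.factorial n : ℝ≥0∞)) •
      Measure.map (Sigma.mk n) (Measure.pi fun _ : Fin n => ν)

/-- The creation operator `(T_θ F)(ω) = F(ε⁺_θ ω)`. -/
def T (F : Config Θ → ℝ) (θ : Θ) (ω : Config Θ) : ℝ := F (eplus θ ω)

/-- The difference operator `Ψ_θ F = T_θ F - F`. -/
def Psi (F : Config Θ → ℝ) (θ : Θ) (ω : Config Θ) : ℝ := F (eplus θ ω) - F ω

/-- `ℰu = ∫_Θ u_θ ν(dθ)`. -/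
noncomputable def calE (ν : Measure Θ) (u : Θ → Config Θ → ℝ) (ω : Config Θ) : ℝ :=
  ∫ θ, u θ ω ∂ν

/-- The compensated (Skorohod-type) integral `Φ = S - ℰ`. -/
noncomputable def Phi (ν : Measure Θ) (u : Θ → Config Θ → ℝ) (ω : Config Θ) : ℝ :=
  S u ω - calE ν u ω

/-- A functional on the canonical space is symmetric if it is invariant under
permutations of the points of the configuration. -/
def Symm (F : Config Θ → ℝ) : Prop :=
  ∀ (n : ℕ) (f : Fin n → Θ) (e : Equiv.Perm (Fin n)), F ⟨n, f ∘ e⟩ = F ⟨n, f⟩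

/-- Rule of calculus: `F · Su = S(TF · u)`, `P`-a.s. -/
theorem F_mul_S_eq_S_TF_mul (ν : Measure Θ) [IsFiniteMeasure ν]
    (F : Config Θ → ℝ) (u : Θ → Config Θ → ℝ) (hFsym : Symm F) :
    ∀ᵐ ω ∂(poissonP ν), F ω * S u ω = S (fun θ ω' => T F θ ω' * u θ ω') ω := by
  refine Eventually.of_forall ?_
  rintro ⟨n, f⟩
  cases n with
  | zero => simp [S]
  | succ n =>
    simp only [S, Finset.mul_sum]
    refine Finset.sum_congr rfl fun i _ => ?_
    have hT : T F (f i) ⟨n, i.removeNth f⟩ = F ⟨n + 1, f⟩ := by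
      have hperm : Fin.cons (f i) (i.removeNth f) =
          f ∘ ((finSuccEquiv n).trans (finSuccEquiv' i).symm) := by
        funext j
        refine Fin.cases ?_ (fun j => ?_) j <;>
          simp [Fin.removeNth]
      show F ⟨n + 1, Fin.cons (f i) (i.removeNth f)⟩ = F ⟨n + 1, f⟩
      rw [hperm]
      exact hFsym (n + 1) f _
    rw [hT]

end PoissonCanonical
end

section
/- On the canonical Poisson space, if u and Tu are in the domain of S, then T_θ(Su) = u_θ + S(T_θ u) for ν ⊗ P-almost every (θ, ω). -/
open MeasureTheory ENNReal Real Filter Topology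

namespace PoissonCanonical

variable {Θ : Type*} [MeasurableSpace Θ]

/-- Commutation relation: `T_θ(Su) = u_θ + S(T_θ u)`, `ν ⊗ P`-a.e. -/
theorem T_S_commutation (ν : Measure Θ) [IsFiniteMeasure ν] (u : Θ → Config Θ → ℝ) :
    ∀ᵐ p ∂(ν.prod (poissonP ν)),
      T (S u) p.1 p.2 = u p.1 p.2 + S (fun θ' ω => u θ' (eplus p.1 ω)) p.2 := by
  refine Filter.Eventually.of_forall ?_
  rintro ⟨θ, n, f⟩
  have hrem : ∀ (m : ℕ) (g : Fin (m + 1) → Θ) (j : Fin (m + 1)),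
      Fin.removeNth (α := fun _ => Θ) j.succ (Fin.cons θ g) = Fin.cons θ (Fin.removeNth (α := fun _ => Θ) j g) := by
    intro m g j
    funext k
    induction k using Fin.cases with
    | zero =>
      simp [Fin.removeNth, Fin.succ_succAbove_zero]
    | succ l =>
      simp [Fin.removeNth, Fin.succ_succAbove_succ]
  cases n with
  | zero =>
    simp only [T, eplus, S, Fin.sum_univ_succ, Fin.sum_univ_zero, Fin.cons_zero,
      Fin.removeNth_zero, Fin.tail_cons, add_zero]
  | succ m =>
    simp only [T, eplus, S, Fin.sum_univ_succ (n := m + 1), Fin.cons_zero, Fin.cons_succ,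
      Fin.removeNth_zero, Fin.tail_cons]
    congr 1
    refine Finset.sum_congr rfl fun j _ => ?_
    rw [hrem]

end PoissonCanonical
end

section
/- If u and Ψu belong to Dom Φ, then Ψ_θ(Φu) = u_θ + Φ(Ψ_θ u) for ν⊗P-almost every (θ,ω). -/
open MeasureTheory ENNReal Real Filter Topology

namespace PoissonCanonical

variable {Θ : Type*} [MeasurableSpace Θ]

instance poissonP_sFinite (ν : Measure Θ) [IsFiniteMeasure ν] : SFinite (poissonP ν) := by
  unfold poissonP; infer_instance

lemma removeNth_succ_cons {n : ℕ} (θ : Θ) (f : Fin (n+1) → Θ) (j : Fin (n+1)) :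
    Fin.removeNth (α := fun _ => Θ) (Fin.succ j) (Fin.cons θ f)
      = Fin.cons θ (Fin.removeNth (α := fun _ => Θ) j f) := by
  funext k
  induction k using Fin.cases with
  | zero => simp [Fin.removeNth, Fin.succ_succAbove_zero]
  | succ l => simp [Fin.removeNth, Fin.succ_succAbove_succ]

lemma S_eplus (u : Θ → Config Θ → ℝ) (θ : Θ) (ω : Config Θ) :
    S u (eplus θ ω) = u θ ω + S (fun θ' ω' => u θ' (eplus θ ω')) ω := by
  obtain ⟨n, f⟩ := ω
  cases n with
  | zero =>
    show ∑ i : Fin 1, _ = _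
    simp only [S, add_zero, Fin.sum_univ_one]
    exact congrArg (fun g => u θ ⟨0, g⟩) (Subsingleton.elim _ _)
  | succ m =>
    show ∑ i : Fin (m+2), u (Fin.cons (α := fun _ => Θ) θ f i)
        ⟨m+1, Fin.removeNth (α := fun _ => Θ) i (Fin.cons θ f)⟩ = _
    rw [Fin.sum_univ_succ]
    simp only [Fin.cons_zero, Fin.cons_succ, S, eplus]
    congr 1
    exact Finset.sum_congr rfl fun j _ => by rw [removeNth_succ_cons]

lemma S_sub (a b : Θ → Config Θ → ℝ) (ω : Config Θ) :
    S (fun θ' ω' => a θ' ω' - b θ' ω') ω = S a ω - S b ω := by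
  obtain ⟨n, f⟩ := ω
  cases n with
  | zero => simp [S]
  | succ m => simp [S, Finset.sum_sub_distrib]

/-- Fundamental commutation relation: `Ψ_θ(Φu) = u_θ + Φ(Ψ_θ u)`, `ν⊗P`-a.e. -/
theorem psi_phi_commutation (ν : Measure Θ) [IsFiniteMeasure ν] (u : Θ → Config Θ → ℝ)
    (h1 : ∀ᵐ ω ∂(poissonP ν), Integrable (fun θ => u θ ω) ν)
    (h2 : ∀ᵐ p ∂(ν.prod (poissonP ν)), Integrable (fun θ' => Psi (u θ') p.1 p.2) ν) :
    ∀ᵐ p ∂(ν.prod (poissonP ν)),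
      Psi (Phi ν u) p.1 p.2 = u p.1 p.2 + Phi ν (fun θ' ω => Psi (u θ') p.1 ω) p.2 := by
  have h1' : ∀ᵐ p ∂(ν.prod (poissonP ν)), Integrable (fun θ' => u θ' p.2) ν :=
    Measure.quasiMeasurePreserving_snd.tendsto_ae.eventually h1
  filter_upwards [h1', h2] with p hp1 hp2
  obtain ⟨θ, ω⟩ := p
  simp only at hp1 hp2 ⊢
  have hint : Integrable (fun θ' => u θ' (eplus θ ω)) ν := by
    have h := hp2.add hp1
    refine h.congr (Filter.Eventually.of_forall fun θ' => ?_)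
    simp [Psi]
  have hE : calE ν (fun θ' ω' => Psi (u θ') θ ω') ω = calE ν u (eplus θ ω) - calE ν u ω := by
    simp only [calE, Psi]
    rw [integral_sub hint hp1]
  have hS := S_eplus u θ ω
  have hS2 : S (fun θ' ω' => Psi (u θ') θ ω') ω
      = S (fun θ' ω' => u θ' (eplus θ ω')) ω - S u ω := S_sub _ _ ω
  simp only [Psi, Phi] at hS2 hE ⊢
  rw [hS2, hE, hS]
  ring

end PoissonCanonical
end

section
/- The divergence-type operator S is closed from L¹(Θ×Ω, ν⊗P) to L¹(Ω, P): if u⁽ⁿ⁾ → 0 in L¹(ν⊗P) and Su⁽ⁿ⁾ → G in L¹(P), then G = 0. -/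
open MeasureTheory ENNReal Real Filter Topology

namespace PoissonCanonical

variable {Θ : Type*} [MeasurableSpace Θ]

/-! By the Mecke identity `E ∑_i |u(θ_i, ε⁻_{θ_i} ω)| = ‖u‖_{L¹(ν⊗P)}`, so
`‖Su‖_{L¹(P)} ≤ ‖u‖_{L¹(ν⊗P)}` and `‖G‖₁ ≤ ‖Su⁽ⁿ⁾ - G‖₁ + ‖u⁽ⁿ⁾‖₁ → 0`.
On `(n+1)`-point configurations, splitting off the `i`-th point is measure preserving from
`ν^{⊗(n+1)}` to `ν ⊗ ν^{⊗n}`, so each of the `n+1` terms of the sum contributes the same amount,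
and `(n+1) / (n+1)! = 1 / n!` turns the `(n+1)`-point level of the left side into the `n`-point
level of the right side. -/

lemma measurable_sigmaMk (n : ℕ) : Measurable (Sigma.mk (β := fun n => Fin n → Θ) n) :=
  measurable_iff_le_map.2 (iInf_le _ n)

lemma measurable_config_iff {β : Type*} [MeasurableSpace β] {g : Config Θ → β} :
    Measurable g ↔ ∀ n, Measurable fun f : Fin n → Θ => g ⟨n, f⟩ := by
  refine ⟨fun h n => h.comp (measurable_sigmaMk n), fun h s hs => ?_⟩
  exact MeasurableSpace.measurableSet_iInf.2 fun n => h n hs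

lemma measurable_apply_removeNth {n : ℕ} (i : Fin (n + 1)) :
    Measurable fun f : Fin (n + 1) → Θ => ((f i, ⟨n, i.removeNth f⟩) : Θ × Config Θ) :=
  (measurable_pi_apply i).prodMk
    ((measurable_sigmaMk n).comp (measurable_pi_iff.2 fun _ => measurable_pi_apply _))

lemma measurable_prodMap_sigmaMk (n : ℕ) :
    Measurable fun p : Θ × (Fin n → Θ) => ((p.1, ⟨n, p.2⟩) : Θ × Config Θ) :=
  measurable_fst.prodMk ((measurable_sigmaMk n).comp measurable_snd)

instance (ν : Measure Θ) [SigmaFinite ν] : SFinite (poissonP ν) := by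
  unfold poissonP; infer_instance

noncomputable def poissonWeight (ν : Measure Θ) (n : ℕ) : ℝ≥0∞ :=
  ENNReal.ofReal (Real.exp (-(ν Set.univ).toReal)) / (Nat.factorial n : ℝ≥0∞)

lemma poissonWeight_succ_mul (ν : Measure Θ) (n : ℕ) :
    poissonWeight ν (n + 1) * (n + 1) = poissonWeight ν n := by
  have hn0 : (n + 1 : ℝ≥0∞) ≠ 0 := by simp
  have hnt : (n + 1 : ℝ≥0∞) ≠ ∞ := by simp
  rw [poissonWeight, poissonWeight, Nat.factorial_succ, Nat.cast_mul, Nat.cast_succ,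
    div_eq_mul_inv, mul_right_comm, ← div_eq_mul_inv, mul_comm _ (n + 1 : ℝ≥0∞),
    ENNReal.mul_div_mul_left _ _ hn0 hnt]

lemma lintegral_poissonP (ν : Measure Θ) {F : Config Θ → ℝ≥0∞} (hF : Measurable F) :
    ∫⁻ ω, F ω ∂(poissonP ν) =
      ∑' n, poissonWeight ν n * ∫⁻ f, F ⟨n, f⟩ ∂(Measure.pi fun _ : Fin n => ν) := by
  rw [poissonP, lintegral_sum_measure]
  refine tsum_congr fun n => ?_
  rw [lintegral_smul_measure, lintegral_map hF (measurable_sigmaMk n), smul_eq_mul,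
    poissonWeight]

noncomputable def SENNReal (v : Θ → Config Θ → ℝ≥0∞) : Config Θ → ℝ≥0∞
  | ⟨0, _⟩ => 0
  | ⟨n + 1, f⟩ => ∑ i : Fin (n + 1), v (f i) ⟨n, i.removeNth f⟩

lemma measurable_SENNReal {v : Θ → Config Θ → ℝ≥0∞} (hv : Measurable (Function.uncurry v)) :
    Measurable (SENNReal v) := by
  refine measurable_config_iff.2 fun n => ?_
  rcases n with _ | n
  · exact measurable_const
  · exact Finset.measurable_sum _ fun i _ => hv.comp (measurable_apply_removeNth i)

lemma measurable_S {u : Θ → Config Θ → ℝ} (hu : Measurable (Function.uncurry u)) :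
    Measurable (S u) := by
  refine measurable_config_iff.2 fun n => ?_
  rcases n with _ | n
  · exact measurable_const
  · exact Finset.measurable_sum _ fun i _ => hu.comp (measurable_apply_removeNth i)

section Mecke

variable (ν : Measure Θ) [SigmaFinite ν] {v : Θ → Config Θ → ℝ≥0∞}

lemma lintegral_pi_apply_removeNth {n : ℕ} (hv : Measurable (Function.uncurry v))
    (i : Fin (n + 1)) :
    ∫⁻ f, v (f i) ⟨n, i.removeNth f⟩ ∂(Measure.pi fun _ : Fin (n + 1) => ν) =
      ∫⁻ p, v p.1 ⟨n, p.2⟩ ∂(ν.prod (Measure.pi fun _ : Fin n => ν)) :=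
  (measurePreserving_piFinSuccAbove (fun _ : Fin (n + 1) => ν) i).lintegral_comp
    (hv.comp (measurable_prodMap_sigmaMk n))

lemma lintegral_pi_SENNReal_succ (hv : Measurable (Function.uncurry v)) (n : ℕ) :
    ∫⁻ f, SENNReal v ⟨n + 1, f⟩ ∂(Measure.pi fun _ : Fin (n + 1) => ν) =
      (n + 1) * ∫⁻ p, v p.1 ⟨n, p.2⟩ ∂(ν.prod (Measure.pi fun _ : Fin n => ν)) := by
  have hterm (i : Fin (n + 1)) :
      Measurable fun f : Fin (n + 1) → Θ => v (f i) ⟨n, i.removeNth f⟩ :=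
    hv.comp (measurable_apply_removeNth i)
  simp only [SENNReal]
  rw [lintegral_finsetSum _ fun i _ => hterm i]
  simp_rw [lintegral_pi_apply_removeNth ν hv]
  rw [Finset.sum_const, Finset.card_univ, Fintype.card_fin, nsmul_eq_mul, Nat.cast_succ]

lemma lintegral_prod_poissonP (hv : Measurable (Function.uncurry v)) :
    ∫⁻ p, v p.1 p.2 ∂(ν.prod (poissonP ν)) =
      ∑' n, poissonWeight ν n *
        ∫⁻ p, v p.1 ⟨n, p.2⟩ ∂(ν.prod (Measure.pi fun _ : Fin n => ν)) := by
  have hvn (n : ℕ) : Measurable fun p : Θ × (Fin n → Θ) => v p.1 ⟨n, p.2⟩ :=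
    hv.comp (measurable_prodMap_sigmaMk n)
  rw [lintegral_prod (f := fun p : Θ × Config Θ => v p.1 p.2) hv.aemeasurable]
  dsimp only
  simp_rw [lintegral_poissonP ν hv.of_uncurry_left]
  rw [lintegral_tsum fun n => ((hvn n).lintegral_prod_right'.const_mul _).aemeasurable]
  refine tsum_congr fun n => ?_
  rw [lintegral_const_mul _ (hvn n).lintegral_prod_right', lintegral_prod _ (hvn n).aemeasurable]

/-- The Mecke identity. -/
theorem lintegral_SENNReal_poissonP (hv : Measurable (Function.uncurry v)) :
    ∫⁻ ω, SENNReal v ω ∂(poissonP ν) = ∫⁻ p, v p.1 p.2 ∂(ν.prod (poissonP ν)) := by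
  rw [lintegral_poissonP ν (measurable_SENNReal hv), lintegral_prod_poissonP ν hv,
    tsum_eq_zero_add' ENNReal.summable]
  simp only [SENNReal.eq_1, lintegral_const, zero_mul, mul_zero, zero_add]
  refine tsum_congr fun n => ?_
  rw [lintegral_pi_SENNReal_succ ν hv, ← mul_assoc, poissonWeight_succ_mul]

end Mecke

omit [MeasurableSpace Θ] in
lemma ofReal_abs_S_le (u : Θ → Config Θ → ℝ) (ω : Config Θ) :
    ENNReal.ofReal |S u ω| ≤ SENNReal (fun θ ω => ENNReal.ofReal |u θ ω|) ω := by
  rcases ω with ⟨_ | n, f⟩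
  · simp [S, SENNReal]
  · calc ENNReal.ofReal |S u ⟨n + 1, f⟩|
        ≤ ENNReal.ofReal (∑ i : Fin (n + 1), |u (f i) ⟨n, i.removeNth f⟩|) :=
          ENNReal.ofReal_le_ofReal (Finset.abs_sum_le_sum_abs _ _)
      _ = SENNReal (fun θ ω => ENNReal.ofReal |u θ ω|) ⟨n + 1, f⟩ :=
          ENNReal.ofReal_sum_of_nonneg fun i _ => abs_nonneg _

lemma integral_abs_le_integral_abs_sub_add {α : Type*} [MeasurableSpace α] {μ : Measure α}
    {f g : α → ℝ} (hf : Integrable f μ) (hg : Integrable g μ) :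
    ∫ x, |g x| ∂μ ≤ ∫ x, |f x - g x| ∂μ + ∫ x, |f x| ∂μ := by
  have hfg : Integrable (fun x => |f x - g x|) μ := (hf.sub hg).abs
  rw [← integral_add hfg hf.abs]
  refine integral_mono hg.abs (hfg.add hf.abs) fun x => ?_
  have := abs_sub_abs_le_abs_sub (g x) (f x)
  rw [abs_sub_comm] at this
  linarith

section Closedness

variable {ν : Measure Θ} [SigmaFinite ν] {u : Θ → Config Θ → ℝ}

lemma lintegral_abs_S_le (hu : Measurable (Function.uncurry u)) :
    ∫⁻ ω, ENNReal.ofReal |S u ω| ∂(poissonP ν) ≤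
      ∫⁻ p, ENNReal.ofReal |u p.1 p.2| ∂(ν.prod (poissonP ν)) :=
  (lintegral_mono (ofReal_abs_S_le u)).trans_eq
    (lintegral_SENNReal_poissonP ν (ENNReal.measurable_ofReal.comp hu.abs))

lemma integrable_S (hm : Measurable (Function.uncurry u))
    (hu : Integrable (fun p : Θ × Config Θ => u p.1 p.2) (ν.prod (poissonP ν))) :
    Integrable (S u) (poissonP ν) := by
  refine ⟨(measurable_S hm).aestronglyMeasurable, (hasFiniteIntegral_iff_norm _).2 ?_⟩
  have hfin := (hasFiniteIntegral_iff_norm _).1 hu.2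
  simp only [Real.norm_eq_abs] at hfin ⊢
  exact (lintegral_abs_S_le hm).trans_lt hfin

lemma integral_abs_S_le (hm : Measurable (Function.uncurry u))
    (hu : Integrable (fun p : Θ × Config Θ => u p.1 p.2) (ν.prod (poissonP ν))) :
    ∫ ω, |S u ω| ∂(poissonP ν) ≤ ∫ p, |u p.1 p.2| ∂(ν.prod (poissonP ν)) := by
  rw [← ENNReal.ofReal_le_ofReal_iff (integral_nonneg fun _ => abs_nonneg _),
    ofReal_integral_eq_lintegral_ofReal (integrable_S hm hu).abs
      (ae_of_all _ fun _ => abs_nonneg _),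
    ofReal_integral_eq_lintegral_ofReal hu.abs (ae_of_all _ fun _ => abs_nonneg _)]
  exact lintegral_abs_S_le hm

end Closedness

theorem S_closed_L1_general (ν : Measure Θ) [IsFiniteMeasure ν]
    (u : ℕ → Θ → Config Θ → ℝ) (G : Config Θ → ℝ)
    (humeas : ∀ n, Measurable (Function.uncurry (u n)))
    (hu : ∀ n, Integrable (fun p : Θ × Config Θ => u n p.1 p.2) (ν.prod (poissonP ν)))
    (hG : Integrable G (poissonP ν))
    (hu0 : Filter.Tendsto (fun n => ∫ p, |u n p.1 p.2| ∂(ν.prod (poissonP ν)))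
      Filter.atTop (nhds 0))
    (hSG : Filter.Tendsto (fun n => ∫ ω, |S (u n) ω - G ω| ∂(poissonP ν))
      Filter.atTop (nhds 0)) :
    ∀ᵐ ω ∂(poissonP ν), G ω = 0 := by
  have hbound (n : ℕ) : ∫ ω, |G ω| ∂(poissonP ν) ≤
      ∫ ω, |S (u n) ω - G ω| ∂(poissonP ν) + ∫ p, |u n p.1 p.2| ∂(ν.prod (poissonP ν)) :=
    (integral_abs_le_integral_abs_sub_add (integrable_S (humeas n) (hu n)) hG).trans
      (add_le_add_right (integral_abs_S_le (humeas n) (hu n)) _)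
  have hzero : ∫ ω, |G ω| ∂(poissonP ν) = 0 :=
    le_antisymm (ge_of_tendsto (by simpa using hSG.add hu0) (Eventually.of_forall hbound))
      (integral_nonneg fun _ => abs_nonneg _)
  filter_upwards [(integral_eq_zero_iff_of_nonneg (fun _ => abs_nonneg _) hG.abs).1 hzero]
    with ω hω
  simpa using hω

/-- The operator `S` is closed from `L¹(Θ×Ω, ν⊗P)` to `L¹(Ω,P)`: if `uⁿ → 0` in
`L¹(ν⊗P)` and `S uⁿ → G` in `L¹(P)`, then `G = 0` a.s. -/
theorem S_closed_L1 (ν : Measure Θ) [IsFiniteMeasure ν]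
    (u : ℕ → Θ → Config Θ → ℝ) (G : Config Θ → ℝ)
    (humeas : ∀ n, Measurable (Function.uncurry (u n)))
    (hu : ∀ n, Integrable (fun p : Θ × Config Θ => u n p.1 p.2) (ν.prod (poissonP ν)))
    (hSu : ∀ n, Integrable (S (u n)) (poissonP ν))
    (hG : Integrable G (poissonP ν))
    (hu0 : Filter.Tendsto (fun n => ∫ p, |u n p.1 p.2| ∂(ν.prod (poissonP ν)))
      Filter.atTop (nhds 0))
    (hSG : Filter.Tendsto (fun n => ∫ ω, |S (u n) ω - G ω| ∂(poissonP ν))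
      Filter.atTop (nhds 0)) :
    ∀ᵐ ω ∂(poissonP ν), G ω = 0 :=
  S_closed_L1_general ν u G humeas hu hG hu0 hSG

end PoissonCanonical
end
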